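/- Let Ω be a generic corner with parameter μ. If x ∈ Ω, r > 0 and B(x,r) ⊂ Ω, then for every t ≥ 0 one has B(x + t(a+b+c), r + μt) ⊂ Ω. -/

import Mathlib

noncomputable section

open MeasureTheory Metric Set

/-- ℝ³ as a Euclidean space. -/
abbrev E3 : Type := EuclideanSpace ℝ (Fin 3)

/-- Construct a vector of ℝ³ from its three coordinates. -/
def v3 (x y z : ℝ) : E3 := WithLp.toLp 2 ![x, y, z]

/-- The Euclidean dot product on ℝ³. -/
def dot3 (u v : E3) : ℝ := ∑ i : Fin 3, u i * v i

/-- The cross product on ℝ³. -/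
def cross3 (u v : E3) : E3 :=
  v3 (u 1 * v 2 - u 2 * v 1) (u 2 * v 0 - u 0 * v 2) (u 0 * v 1 - u 1 * v 0)

/-- Divergence of a vector field on ℝ³. -/
def divg (φ : E3 → E3) (x : E3) : ℝ :=
  ∑ i : Fin 3, fderiv ℝ φ x (EuclideanSpace.single i 1) i

/-- The set of test values defining the total variation of `χ` on `Ω`:
values `∫_Ω χ div φ` for `φ` a C¹ vector field compactly supported in `Ω` with `‖φ‖ ≤ 1`. -/
def tvSet (Ω : Set E3) (χ : E3 → ℝ) : Set ℝ :=
  {v : ℝ | ∃ φ : E3 → E3, ContDiff ℝ 1 φ ∧ HasCompactSupport φ ∧ tsupport φ ⊆ Ω ∧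
      (∀ x, ‖φ x‖ ≤ 1) ∧ v = ∫ x in Ω, χ x * divg φ x}

/-- The total variation `∫_Ω |∇χ|`. -/
def totalVariation (Ω : Set E3) (χ : E3 → ℝ) : ℝ := sSup (tvSet Ω χ)

/-- `χ ∈ BV(Ω, {0,1})`. -/
def IsBVIndicator (Ω : Set E3) (χ : E3 → ℝ) : Prop :=
  Measurable χ ∧ (∀ x, χ x = 0 ∨ χ x = 1) ∧ BddAbove (tvSet Ω χ)

/-- An admissible phase indicator `χ = (χ₁, χ₂, χ₃)`:
each `χᵢ ∈ BV(Ω, {0,1})` and `χ₁ + χ₂ + χ₃ ≤ 1`. -/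
def AdmissiblePhase (Ω : Set E3) (χ : Fin 3 → E3 → ℝ) : Prop :=
  (∀ i, IsBVIndicator Ω (χ i)) ∧ ∀ x, χ 0 x + χ 1 x + χ 2 x ≤ 1

/-- The volume `V = ∫_Ω (χ₁ + χ₂ + χ₃)` of the martensitic inclusion. -/
def phaseVolume (Ω : Set E3) (χ : Fin 3 → E3 → ℝ) : ℝ :=
  ∫ x in Ω, (χ 0 x + χ 1 x + χ 2 x)

/-- Squared Frobenius norm of a 3×3 matrix. -/
def frobSq (A : Matrix (Fin 3) (Fin 3) ℝ) : ℝ := ∑ i : Fin 3, ∑ j : Fin 3, (A i j) ^ 2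

/-- Symmetric part `e(A) = (A + Aᵀ)/2` of a matrix. -/
def matSym (A : Matrix (Fin 3) (Fin 3) ℝ) : Matrix (Fin 3) (Fin 3) ℝ :=
  (2⁻¹ : ℝ) • (A + A.transpose)

/-- The symmetrized gradient `e(u) = (∇u + ∇uᵀ)/2` of a displacement `u`. -/
def symGrad (u : E3 → E3) (x : E3) : Matrix (Fin 3) (Fin 3) ℝ :=
  Matrix.of fun i j =>
    (fderiv ℝ u x (EuclideanSpace.single j 1) i + fderiv ℝ u x (EuclideanSpace.single i 1) j) / 2

/-- Stress-free strain of the first martensite variant. -/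
def em1 : Matrix (Fin 3) (Fin 3) ℝ := Matrix.diagonal ![-2, 1, 1]

/-- Stress-free strain of the second martensite variant. -/
def em2 : Matrix (Fin 3) (Fin 3) ℝ := Matrix.diagonal ![1, -2, 1]

/-- Stress-free strain of the third martensite variant. -/
def em3 : Matrix (Fin 3) (Fin 3) ℝ := Matrix.diagonal ![1, 1, -2]

/-- The three stress-free strains of martensite. -/
def strains : Fin 3 → Matrix (Fin 3) (Fin 3) ℝ := ![em1, em2, em3]

/-- `Σᵢ χᵢ e⁽ⁱ⁾`. -/
def phaseStrain (χ : Fin 3 → E3 → ℝ) (x : E3) : Matrix (Fin 3) (Fin 3) ℝ :=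
  ∑ i : Fin 3, χ i x • strains i

/-- A (Sobolev-type) admissibility class for displacements: `u` and `∇u` are square
integrable on `Ω` and `u` is a.e. differentiable. Stands in for `H¹(Ω, ℝ³)`. -/
def IsH1 (Ω : Set E3) (u : E3 → E3) : Prop :=
  AEStronglyMeasurable u (volume.restrict Ω) ∧
  (∀ᵐ x ∂(volume.restrict Ω), DifferentiableAt ℝ u x) ∧
  IntegrableOn (fun x => ‖u x‖ ^ 2) Ω ∧
  IntegrableOn (fun x => ‖fderiv ℝ u x‖ ^ 2) Ω

/-- The elastic integral `∫_Ω |e(u) − Σᵢ χᵢ e⁽ⁱ⁾|² dx`. -/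
def elasticIntegral (Ω : Set E3) (χ : Fin 3 → E3 → ℝ) (u : E3 → E3) : ℝ :=
  ∫ x in Ω, frobSq (symGrad u x - phaseStrain χ x)

/-- The interfacial energy `E_interf[χ] = Σᵢ ∫_Ω |∇χᵢ|`. -/
def interfEnergy (Ω : Set E3) (χ : Fin 3 → E3 → ℝ) : ℝ :=
  ∑ i : Fin 3, totalVariation Ω (χ i)

/-- The elastic energy `E_elast[χ] = inf_{u ∈ H¹} ∫_Ω |e(u) − Σᵢ χᵢ e⁽ⁱ⁾|² dx`. -/
def elastEnergy (Ω : Set E3) (χ : Fin 3 → E3 → ℝ) : ℝ :=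
  sInf {v : ℝ | ∃ u : E3 → E3, IsH1 Ω u ∧ v = elasticIntegral Ω χ u}

/-- The total energy `E[χ] = E_interf[χ] + E_elast[χ]`. -/
def totalEnergy (Ω : Set E3) (χ : Fin 3 → E3 → ℝ) : ℝ :=
  interfEnergy Ω χ + elastEnergy Ω χ

/-- Twin/habit plane normals. -/
def nb12 : E3 := v3 (1 / Real.sqrt 2) (1 / Real.sqrt 2) 0
def nb21 : E3 := v3 (-(1 / Real.sqrt 2)) (1 / Real.sqrt 2) 0
def nb31 : E3 := v3 (1 / Real.sqrt 2) 0 (1 / Real.sqrt 2)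
def nb13 : E3 := v3 (1 / Real.sqrt 2) 0 (-(1 / Real.sqrt 2))
def nb23 : E3 := v3 0 (1 / Real.sqrt 2) (1 / Real.sqrt 2)
def nb32 : E3 := v3 0 (-(1 / Real.sqrt 2)) (1 / Real.sqrt 2)

/-- The corner domain `Ω = {αa + βb + γc : α, β, γ ≥ 0}`. -/
def corner (a b c : E3) : Set E3 :=
  {x | ∃ α β γ : ℝ, 0 ≤ α ∧ 0 ≤ β ∧ 0 ≤ γ ∧ x = α • a + β • b + γ • c}

/-- A generic corner: `a, b, c` are unit vectors in positive order such that the habit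
plane normal `n = b₂₃` cuts off the corner (`a·n, b·n, c·n > 0`). -/
def GenericCorner (a b c : E3) : Prop :=
  ‖a‖ = 1 ∧ ‖b‖ = 1 ∧ ‖c‖ = 1 ∧
  0 < dot3 (cross3 a b) c ∧ 0 < dot3 (cross3 b c) a ∧ 0 < dot3 (cross3 c a) b ∧
  0 < dot3 a nb23 ∧ 0 < dot3 b nb23 ∧ 0 < dot3 c nb23

/-- The parameter `μ` of the corner. -/
def cornerMu (a b c : E3) : ℝ :=
  min (dot3 (‖cross3 a b‖⁻¹ • cross3 a b) c)
    (min (dot3 (‖cross3 b c‖⁻¹ • cross3 b c) a) (dot3 (‖cross3 c a‖⁻¹ • cross3 c a) b))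

/-- `b₃ = (b₂₁ × b₃₂)/|b₂₁ × b₃₂|`. -/
def bb3v : E3 := ‖cross3 nb21 nb32‖⁻¹ • cross3 nb21 nb32

/-- `b₂ = (b₃₂ × b₃)/|b₃₂ × b₃|`. -/
def bb2v : E3 := ‖cross3 nb32 bb3v‖⁻¹ • cross3 nb32 bb3v

/-- `b₁ = (b₃ × b₂₁)/|b₃ × b₂₁|`. -/
def bb1v : E3 := ‖cross3 bb3v nb21‖⁻¹ • cross3 bb3v nb21

/-- The coordinates `yᵢ = x·bᵢ`. -/
def ycoord (i : Fin 3) (x : E3) : ℝ := dot3 x (![bb1v, bb2v, bb3v] i)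

/-- The box `C_R = {−R ≤ y₁ ≤ R, 0 ≤ y₂ ≤ R, 0 ≤ y₃ ≤ R}`. -/
def CRset (R : ℝ) : Set E3 :=
  {x | -R ≤ ycoord 0 x ∧ ycoord 0 x ≤ R ∧ 0 ≤ ycoord 1 x ∧ ycoord 1 x ≤ R ∧
       0 ≤ ycoord 2 x ∧ ycoord 2 x ≤ R}

/-- `C_R⁻ = C_R ∩ {y₁ ≤ 0}`. -/
def CRminus (R : ℝ) : Set E3 := CRset R ∩ {x | ycoord 0 x ≤ 0}

/-- `C_R⁺ = C_R ∩ {y₁ > 0}`. -/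
def CRplus (R : ℝ) : Set E3 := CRset R ∩ {x | 0 < ycoord 0 x}

/-- Matrices of the upper-bound construction. -/
def D1 : Matrix (Fin 3) (Fin 3) ℝ := Matrix.of ![![-2, 2, 0], ![-2, 1, 1], ![0, -1, 1]]
def D2 : Matrix (Fin 3) (Fin 3) ℝ := Matrix.of ![![1, -1, 0], ![1, -2, 1], ![0, -1, 1]]
def DM : Matrix (Fin 3) (Fin 3) ℝ := Matrix.of ![![0, 0, 0], ![0, -1, 1], ![0, -1, 1]]

/-- Tensor product `u ⊗ v` of two vectors. -/
def outer (u v : E3) : Matrix (Fin 3) (Fin 3) ℝ := Matrix.of fun i j => u i * v j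

/-- Symmetrized tensor product `u ⊙ v = (u⊗v + v⊗u)/2`. -/
def symOuter (u v : E3) : Matrix (Fin 3) (Fin 3) ℝ := (2⁻¹ : ℝ) • (outer u v + outer v u)


/-!
Since `(a × b) · c > 0`, Cramer's rule shows that `Ω` is the intersection of the three
half-spaces `{y | 0 ≤ N · y}` with `N = a × b, b × c, c × a`. A ball `B(x, r)` lies in such a
half-space iff `r ‖N‖ ≤ N · x`. Moving the centre by `t (a + b + c)` raises `N · x` by
`t N · (a + b + c)`, which for `N = a × b` is `t (a × b) · c ≥ μ t ‖N‖`; so the radius may grow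
by `μ t`, and the other two faces follow by cyclic symmetry of the corner.
-/

open scoped InnerProductSpace

section HalfSpace

variable {F : Type*} [NormedAddCommGroup F] [InnerProductSpace ℝ F]

def halfSpace (N : F) : Set F := {y | 0 ≤ ⟪N, y⟫_ℝ}

lemma isClosed_halfSpace (N : F) : IsClosed (halfSpace N) :=
  isClosed_le continuous_const (continuous_const.inner continuous_id)

lemma mul_norm_le_inner_of_ball_subset_halfSpace {N x : F} {r : ℝ} (hr : 0 < r)
    (h : ball x r ⊆ halfSpace N) : r * ‖N‖ ≤ ⟪N, x⟫_ℝ := by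
  have hclosed : closedBall x r ⊆ halfSpace N := by
    rw [← closure_ball x hr.ne']
    exact closure_minimal h (isClosed_halfSpace N)
  rcases eq_or_ne N 0 with rfl | hN
  · simp
  have hN' : 0 < ‖N‖ := norm_pos_iff.mpr hN
  -- `⟪N, ·⟫` attains its minimum over `closedBall x r` at this point.
  have hmem : x - (r / ‖N‖) • N ∈ closedBall x r := by
    rw [mem_closedBall, dist_eq_norm, sub_sub_cancel_left, norm_neg, norm_smul,
      Real.norm_of_nonneg (by positivity), div_mul_cancel₀ _ hN'.ne']
  have h0 : 0 ≤ ⟪N, x - (r / ‖N‖) • N⟫_ℝ := hclosed hmem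
  rw [inner_sub_right, real_inner_smul_right, real_inner_self_eq_norm_sq, div_mul_eq_mul_div,
    pow_two, mul_div_assoc, mul_self_div_self] at h0
  linarith

lemma ball_add_subset_halfSpace {N x v : F} {r s : ℝ} (hx : r * ‖N‖ ≤ ⟪N, x⟫_ℝ)
    (hv : s * ‖N‖ ≤ ⟪N, v⟫_ℝ) : ball (x + v) (r + s) ⊆ halfSpace N := by
  intro y hy
  have hd : ‖y - (x + v)‖ < r + s := by rwa [← dist_eq_norm]
  have hcs : -⟪N, y - (x + v)⟫_ℝ ≤ ‖N‖ * ‖y - (x + v)‖ :=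
    (neg_le_abs _).trans (abs_real_inner_le_norm _ _)
  have hsplit : ⟪N, y⟫_ℝ = ⟪N, x⟫_ℝ + ⟪N, v⟫_ℝ + ⟪N, y - (x + v)⟫_ℝ := by
    rw [inner_sub_right, inner_add_right]; ring
  show 0 ≤ ⟪N, y⟫_ℝ
  nlinarith [mul_le_mul_of_nonneg_left hd.le (norm_nonneg N)]

end HalfSpace

section Corner

open Matrix

lemma dot3_eq_dotProduct (u v : E3) : dot3 u v = u.ofLp ⬝ᵥ v.ofLp := rfl

lemma dot3_eq_inner (u v : E3) : dot3 u v = ⟪u, v⟫_ℝ := by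
  rw [dot3_eq_dotProduct, EuclideanSpace.inner_eq_star_dotProduct, star_trivial, dotProduct_comm]

lemma ofLp_cross3 (u v : E3) : (cross3 u v).ofLp = u.ofLp ⨯₃ v.ofLp := by
  ext i; fin_cases i <;> simp [cross3, v3, cross_apply]

lemma dot3_cross3_self_left (u v : E3) : dot3 (cross3 u v) u = 0 := by
  rw [dot3_eq_dotProduct, ofLp_cross3, dotProduct_comm, dot_self_cross]

lemma dot3_cross3_self_right (u v : E3) : dot3 (cross3 u v) v = 0 := by
  rw [dot3_eq_dotProduct, ofLp_cross3, dotProduct_comm, dot_cross_self]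

lemma dot3_cross3_rotate (u v w : E3) : dot3 (cross3 v w) u = dot3 (cross3 u v) w := by
  rw [dot3_eq_dotProduct, dot3_eq_dotProduct, ofLp_cross3, ofLp_cross3, dotProduct_comm,
    triple_product_permutation, triple_product_permutation, dotProduct_comm]

lemma cross3_cramer (a b c y : E3) :
    dot3 (cross3 a b) c • y =
      dot3 (cross3 b c) y • a + dot3 (cross3 c a) y • b + dot3 (cross3 a b) y • c := by
  ext i
  fin_cases i <;>
    simp only [dot3, cross3, v3, Fin.isValue, Fin.sum_univ_three, cons_val_zero, cons_val_one,
      cons_val, Fin.zero_eta, Fin.mk_one, Fin.reduceFinMk, PiLp.smul_apply, smul_eq_mul,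
      PiLp.add_apply] <;>
    ring

lemma corner_rotate (a b c : E3) : corner b c a = corner a b c := by
  ext y
  constructor
  · rintro ⟨β, γ, α, hβ, hγ, hα, rfl⟩
    exact ⟨α, β, γ, hα, hβ, hγ, by abel⟩
  · rintro ⟨α, β, γ, hα, hβ, hγ, rfl⟩
    exact ⟨β, γ, α, hβ, hγ, hα, by abel⟩

lemma cornerMu_rotate (a b c : E3) : cornerMu b c a = cornerMu a b c := by
  simp only [cornerMu, min_comm, min_left_comm]

lemma corner_subset_halfSpace_cross3 {a b c : E3} (hc : 0 ≤ dot3 (cross3 a b) c) :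
    corner a b c ⊆ halfSpace (cross3 a b) := by
  rintro _ ⟨α, β, γ, -, -, hγ, rfl⟩
  show 0 ≤ ⟪cross3 a b, α • a + β • b + γ • c⟫_ℝ
  simp only [inner_add_right, real_inner_smul_right, ← dot3_eq_inner, dot3_cross3_self_left,
    dot3_cross3_self_right]
  simpa using mul_nonneg hγ hc

lemma corner_eq_inter_halfSpace {a b c : E3} (hT : 0 < dot3 (cross3 a b) c) :
    corner a b c = halfSpace (cross3 a b) ∩ halfSpace (cross3 b c) ∩ halfSpace (cross3 c a) := by
  refine Subset.antisymm (subset_inter (subset_inter ?_ ?_) ?_) ?_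
  · exact corner_subset_halfSpace_cross3 hT.le
  · rw [← corner_rotate]
    exact corner_subset_halfSpace_cross3 (by rw [dot3_cross3_rotate]; exact hT.le)
  · rw [← corner_rotate, ← corner_rotate]
    refine corner_subset_halfSpace_cross3 ?_
    rw [dot3_cross3_rotate, dot3_cross3_rotate]
    exact hT.le
  · rintro y ⟨⟨hab, hbc⟩, hca⟩
    simp only [halfSpace, mem_ofPred_eq, ← dot3_eq_inner] at hab hbc hca
    set T := dot3 (cross3 a b) c
    refine ⟨dot3 (cross3 b c) y / T, dot3 (cross3 c a) y / T, dot3 (cross3 a b) y / T,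
      by positivity, by positivity, by positivity, ?_⟩
    rw [div_eq_inv_mul, div_eq_inv_mul, div_eq_inv_mul, mul_smul, mul_smul, mul_smul, ← smul_add,
      ← smul_add, ← cross3_cramer, inv_smul_smul₀ hT.ne']

lemma cornerMu_mul_norm_le_inner (a b c : E3) :
    cornerMu a b c * ‖cross3 a b‖ ≤ ⟪cross3 a b, a + b + c⟫_ℝ := by
  have hμ : cornerMu a b c ≤ dot3 (‖cross3 a b‖⁻¹ • cross3 a b) c := min_le_left _ _
  rw [dot3_eq_inner, real_inner_smul_left, ← dot3_eq_inner] at hμ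
  rw [inner_add_right, inner_add_right, ← dot3_eq_inner, ← dot3_eq_inner, ← dot3_eq_inner,
    dot3_cross3_self_left, dot3_cross3_self_right, zero_add, zero_add]
  rcases eq_or_ne (cross3 a b) 0 with h0 | h0
  · simp [h0, dot3]
  calc cornerMu a b c * ‖cross3 a b‖
      ≤ ‖cross3 a b‖⁻¹ * dot3 (cross3 a b) c * ‖cross3 a b‖ :=
        mul_le_mul_of_nonneg_right hμ (norm_nonneg _)
    _ = dot3 (cross3 a b) c := by field_simp

lemma ball_dilation_subset_halfSpace_cross3 {a b c x : E3} {r t : ℝ}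
    (hT : 0 ≤ dot3 (cross3 a b) c) (hr : 0 < r) (hball : ball x r ⊆ corner a b c) (ht : 0 ≤ t) :
    ball (x + t • (a + b + c)) (r + cornerMu a b c * t) ⊆ halfSpace (cross3 a b) := by
  have hx := mul_norm_le_inner_of_ball_subset_halfSpace hr
    (hball.trans (corner_subset_halfSpace_cross3 hT))
  refine ball_add_subset_halfSpace hx ?_
  rw [real_inner_smul_right, mul_right_comm, mul_comm _ t]
  exact mul_le_mul_of_nonneg_left (cornerMu_mul_norm_le_inner a b c) ht

end Corner

theorem ball_dilation_in_corner_general (a b c : E3) (h : GenericCorner a b c)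
    (x : E3) (r : ℝ) (hr : 0 < r)
    (hball : ball x r ⊆ corner a b c) :
    ∀ t : ℝ, 0 ≤ t →
      ball (x + t • (a + b + c)) (r + cornerMu a b c * t) ⊆ corner a b c := by
  obtain ⟨-, -, -, hab, hbc, hca, -, -, -⟩ := h
  intro t ht
  have hball_bca : ball x r ⊆ corner b c a := by rwa [corner_rotate]
  have hball_cab : ball x r ⊆ corner c a b := by rwa [corner_rotate, corner_rotate]
  have hsum_bca : b + c + a = a + b + c := by abel
  have hsum_cab : c + a + b = a + b + c := by abel
  rw [corner_eq_inter_halfSpace hab]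
  refine subset_inter (subset_inter ?_ ?_) ?_
  · exact ball_dilation_subset_halfSpace_cross3 hab.le hr hball ht
  · simpa only [cornerMu_rotate, hsum_bca] using
      ball_dilation_subset_halfSpace_cross3 hbc.le hr hball_bca ht
  · simpa only [cornerMu_rotate, hsum_cab] using
      ball_dilation_subset_halfSpace_cross3 hca.le hr hball_cab ht

/-- dilation of balls inside the corner. If `B(x, r) ⊆ Ω` then for every
`t ≥ 0` one has `B(x + t(a+b+c), r + μt) ⊆ Ω`. -/
theorem ball_dilation_in_corner (a b c : E3) (h : GenericCorner a b c)
    (x : E3) (r : ℝ) (hr : 0 < r) (hx : x ∈ corner a b c)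
    (hball : ball x r ⊆ corner a b c) :
    ∀ t : ℝ, 0 ≤ t →
      ball (x + t • (a + b + c)) (r + cornerMu a b c * t) ⊆ corner a b c :=
  ball_dilation_in_corner_general a b c h x r hr hball
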